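/- Let ρ > 0. For every x ∈ ℝⁿ₊ with ‖x‖₂ ≤ √(2/ρ), the zero vector belongs to prox_{(1/ρ)h₁}(x). -/

import Mathlib

/-- The ℓ₁ norm on `ℝⁿ`. -/
noncomputable def l1norm {n : ℕ} (x : Fin n → ℝ) : ℝ := ∑ i, |x i|

/-- The ℓ₂ norm on `ℝⁿ`. -/
noncomputable def l2norm {n : ℕ} (x : Fin n → ℝ) : ℝ := Real.sqrt (∑ i, (x i) ^ 2)

-- `h₁(x) = ‖x‖₁/‖x‖₂` for `x ≠ 0`, and `h₁(0) = 0`.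
open Classical in
noncomputable def h1 {n : ℕ} (x : Fin n → ℝ) : ℝ :=
  if x = 0 then 0 else l1norm x / l2norm x

/-- `prox_{(1/ρ) f}(z)`: the set of global minimizers of `(ρ/2)‖u - z‖₂² + f(u)`. -/
noncomputable def proxSet {n : ℕ} (ρ : ℝ) (f : (Fin n → ℝ) → ℝ) (z : Fin n → ℝ) :
    Set (Fin n → ℝ) :=
  {u | ∀ v : Fin n → ℝ,
    ρ / 2 * (∑ i, (u i - z i) ^ 2) + f u ≤ ρ / 2 * (∑ i, (v i - z i) ^ 2) + f v}

/-!
Since `‖u‖₂ ≤ ‖u‖₁`, the regularizer `h₁` is at least `1` away from the origin. The objective at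
`u = 0` is `(ρ/2)‖x‖₂² ≤ 1`, while at any `u ≠ 0` it is at least `h₁(u) ≥ 1`.
-/

theorem zero_mem_proxSet_of_one_le {n : ℕ} {ρ : ℝ} (hρ : 0 ≤ ρ) {f : (Fin n → ℝ) → ℝ}
    (hf₀ : f 0 = 0) (hf : ∀ v ≠ 0, 1 ≤ f v) {x : Fin n → ℝ}
    (hx : ρ / 2 * ∑ i, x i ^ 2 ≤ 1) : (0 : Fin n → ℝ) ∈ proxSet ρ f x := by
  intro v
  rcases eq_or_ne v 0 with rfl | hv
  · exact le_rfl
  have hdist : 0 ≤ ρ / 2 * ∑ i, (v i - x i) ^ 2 := by positivity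
  simp only [Pi.zero_apply, zero_sub, neg_sq, hf₀, add_zero]
  linarith [hf v hv]

theorem l2norm_pos {n : ℕ} {x : Fin n → ℝ} (hx : x ≠ 0) : 0 < l2norm x := by
  obtain ⟨i, hi⟩ := Function.ne_iff.mp hx
  refine Real.sqrt_pos.mpr (lt_of_lt_of_le (pow_pos (abs_pos.mpr hi) 2) ?_)
  rw [sq_abs]
  exact Finset.single_le_sum (fun j _ => sq_nonneg (x j)) (Finset.mem_univ i)

theorem l2norm_le_l1norm {n : ℕ} (x : Fin n → ℝ) : l2norm x ≤ l1norm x := by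
  have hsq : ∑ i, x i ^ 2 ≤ l1norm x ^ 2 := by
    simpa only [l1norm, sq_abs] using
      Finset.sum_sq_le_sq_sum_of_nonneg (s := Finset.univ) fun i _ => abs_nonneg (x i)
  exact Real.sqrt_le_left (Finset.sum_nonneg fun i _ => abs_nonneg (x i)) |>.mpr hsq

theorem h1_zero {n : ℕ} : h1 (0 : Fin n → ℝ) = 0 := if_pos rfl

theorem one_le_h1 {n : ℕ} {x : Fin n → ℝ} (hx : x ≠ 0) : 1 ≤ h1 x := by
  rw [h1, if_neg hx]
  exact (one_le_div (l2norm_pos hx)).mpr (l2norm_le_l1norm x)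

theorem stmt_14_general {n : ℕ} (ρ : ℝ) (hρ : 0 < ρ) (x : Fin n → ℝ)
    (hnorm : l2norm x ≤ Real.sqrt (2 / ρ)) :
    (0 : Fin n → ℝ) ∈ proxSet ρ h1 x := by
  have hx : ∑ i, x i ^ 2 ≤ 2 / ρ := (Real.sqrt_le_sqrt_iff (by positivity)).mp hnorm
  refine zero_mem_proxSet_of_one_le hρ.le h1_zero (fun v hv => one_le_h1 hv) ?_
  calc ρ / 2 * ∑ i, x i ^ 2 ≤ ρ / 2 * (2 / ρ) := by gcongr
    _ = 1 := by field_simp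

theorem stmt_14 {n : ℕ} (ρ : ℝ) (hρ : 0 < ρ) (x : Fin n → ℝ)
    (hx : ∀ i, 0 ≤ x i) (hnorm : l2norm x ≤ Real.sqrt (2 / ρ)) :
    (0 : Fin n → ℝ) ∈ proxSet ρ h1 x :=
  stmt_14_general ρ hρ x hnorm
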